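/- arXiv:1605.00172 — 5 statements merged into one kernel-verified Lean document; each statement's English description precedes it below -/
import Mathlib

section
/- Define c(m_1,...,m_d) as the coefficient of ∏_{i=1}^d t_i^{m_i-1} in the polynomial ∏_{i=1}^d ( (t̂_i^{m_i} - t_i^{m_i}) / (t̂_i - t_i) ), where t̂_i = (∑_{j=1}^d t_j) - t_i. Then c(m_1,...,m_d) equals ∑_{k_1=0}^{m_1-1} ... ∑_{k_d=0}^{m_d-1} f(k_1,...,k_d), where f(k_1,...,k_d) is the coefficient of ∏_{i=1}^d t_i^{k_i} in ∏_{i=1}^d ( ∑_{j≠i} t_j )^{k_i}. -/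
/-!
Expanding the product of sums in `cPoly`, the term indexed by `k` is
`∏ t̂_i^{k_i} · ∏ t_i^{m_i-1-k_i}`, and since `k_i ≤ m_i - 1` its coefficient at `∏ t_i^{m_i-1}`
is the coefficient of `∏ t_i^{k_i}` in `∏ t̂_i^{k_i} = fPoly k`.
-/

open MvPolynomial Finset

/-- `t̂_i = (∑_j t_j) - t_i`. -/
noncomputable def that (d : ℕ) (i : Fin d) : MvPolynomial (Fin d) ℤ :=
  (∑ j, X j) - X i

/-- The polynomial `∏_i ∑_{k=0}^{m_i-1} t̂_i^k t_i^{m_i-1-k}`. -/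
noncomputable def cPoly (d : ℕ) (m : Fin d → ℕ) : MvPolynomial (Fin d) ℤ :=
  ∏ i, ∑ k ∈ Finset.range (m i), (that d i) ^ k * (X i) ^ (m i - 1 - k)

/-- `c(m_1,…,m_d)`: the coefficient of `∏ t_i^{m_i-1}` in `cPoly`. -/
noncomputable def c (d : ℕ) (m : Fin d → ℕ) : ℤ :=
  MvPolynomial.coeff (Finsupp.equivFunOnFinite.symm fun i => m i - 1) (cPoly d m)

/-- The polynomial `∏_i (∑_{j≠i} t_j)^{k_i}`. -/
noncomputable def fPoly (d : ℕ) (k : Fin d → ℕ) : MvPolynomial (Fin d) ℤ :=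
  ∏ i, (∑ j ∈ Finset.univ.erase i, X j) ^ k i

/-- `f(k_1,…,k_d)`: the coefficient of `∏ t_i^{k_i}` in `fPoly`. -/
noncomputable def fC (d : ℕ) (k : Fin d → ℕ) : ℤ :=
  MvPolynomial.coeff (Finsupp.equivFunOnFinite.symm k) (fPoly d k)

lemma that_eq_sum_erase (d : ℕ) (i : Fin d) : that d i = ∑ j ∈ univ.erase i, X j := by
  rw [that, ← add_sum_erase _ _ (mem_univ i)]
  ring

section

variable {σ R : Type*} [Fintype σ] [CommSemiring R]

lemma prod_X_pow_eq_monomial_equivFunOnFinite (e : σ → ℕ) :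
    ∏ i, (X i : MvPolynomial σ R) ^ e i = monomial (Finsupp.equivFunOnFinite.symm e) 1 := by
  rw [← prod_X_pow_eq_monomial]
  refine (prod_subset (subset_univ _) fun i _ hi => ?_).symm
  simp_all

lemma coeff_mul_prod_X_pow_sub (p : MvPolynomial σ R) {e k : σ → ℕ} (hk : k ≤ e) :
    coeff (Finsupp.equivFunOnFinite.symm e) (p * ∏ i, X i ^ (e i - k i)) =
      coeff (Finsupp.equivFunOnFinite.symm k) p := by
  have hle : Finsupp.equivFunOnFinite.symm (fun i => e i - k i) ≤
      Finsupp.equivFunOnFinite.symm e :=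
    fun i => Nat.sub_le (e i) (k i)
  have hsub : Finsupp.equivFunOnFinite.symm e -
      Finsupp.equivFunOnFinite.symm (fun i => e i - k i) = Finsupp.equivFunOnFinite.symm k := by
    ext i
    simp [Nat.sub_sub_self (hk i)]
  rw [prod_X_pow_eq_monomial_equivFunOnFinite, coeff_mul_monomial', if_pos hle, mul_one, hsub]

end

theorem c_eq_sum_f_general (d : ℕ) (m : Fin d → ℕ) :
    c d m = ∑ k ∈ Fintype.piFinset (fun i => Finset.range (m i)), fC d k := by
  rw [c, cPoly, prod_univ_sum, coeff_sum]
  refine sum_congr rfl fun k hk => ?_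
  have hk_le : k ≤ fun i => m i - 1 := fun i =>
    Nat.le_sub_one_of_lt (mem_range.mp (Fintype.mem_piFinset.mp hk i))
  rw [prod_mul_distrib, coeff_mul_prod_X_pow_sub _ hk_le, fC, fPoly]
  simp only [that_eq_sum_erase]

/-- `c(m_1,…,m_d) = ∑_{k_1=0}^{m_1-1} ⋯ ∑_{k_d=0}^{m_d-1} f(k_1,…,k_d)`. -/
theorem c_eq_sum_f (d : ℕ) (hd : 1 ≤ d) (m : Fin d → ℕ) (hm : ∀ i, 1 ≤ m i) :
    c d m = ∑ k ∈ Fintype.piFinset (fun i => Finset.range (m i)), fC d k :=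
  c_eq_sum_f_general d m
end

section
/- For the d×d matrix A with all off-diagonal entries equal to 1 and diagonal entries 0, det(I_d - diag(x_1,...,x_d)·A) = 1 - ∑_{i=2}^d (i-1) e_i(x_1,...,x_d), where e_i denotes the elementary symmetric polynomial of degree i in x_1,...,x_d. -/
/-!
Since `I - diag(x)(J - I) = I + diag(x)(I - J)`, multilinearity of the determinant in the rows
expands it as `∑_S (∏_{i ∈ S} x_i) det (I - J)_S` over the principal minors of `I - J`; by the
matrix determinant lemma each of these equals `1 - |S|`. Grouping the subsets by size gives
`∑_k (1 - k) e_k`, and the terms `k = 0, 1` contribute `1` and `0`.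
-/

open MvPolynomial

namespace Matrix

variable {R : Type*} [CommRing R]

theorem det_one_add_diagonal_mul {n : Type*} [Fintype n] [DecidableEq n] (x : n → R)
    (M : Matrix n n R) :
    det (1 + diagonal x * M) =
      ∑ s : Finset n, (∏ i ∈ s, x i) * (M.submatrix (↑) (↑) : Matrix s s R).det := by
  let D : (n → R) [⋀^n]→ₗ[R] R := detRowAlternating
  have hrows : 1 + diagonal x * M = (fun i => x i • M i) + (fun i => (1 : Matrix n n R) i) := by
    ext i j
    simp [diagonal_mul, add_comm]
  have hterm (s : Finset n) :
      s.piecewise (fun i => x i • M i) (fun i => (1 : Matrix n n R) i) =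
        s.piecewise (fun i => x i • s.piecewise M.row (row 1) i) (s.piecewise M.row (row 1)) := by
    ext i j
    by_cases hi : i ∈ s <;> simp [hi]
  change D _ = _
  rw [hrows, D.map_add_univ]
  refine Finset.sum_congr rfl fun s _ => ?_
  rw [hterm, ← D.coe_multilinearMap, D.toMultilinearMap.map_piecewise_smul, smul_eq_mul]
  exact congrArg _ (det_piecewise_one_eq_submatrix_det M s)

theorem det_one_sub_of_one (m : Type*) [Fintype m] [DecidableEq m] :
    det (1 - of fun _ _ : m => (1 : R)) = 1 - (Fintype.card m : R) := by
  have : (of fun _ _ : m => (1 : R)) =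
      (replicateCol Unit (1 : m → R) * replicateRow Unit (1 : m → R) : Matrix m m R) := by
    ext i j
    simp [← vecMulVec_eq, vecMulVec_apply]
  rw [this, det_one_sub_mul_comm]
  simp [dotProduct]

end Matrix

open Finset in
theorem MvPolynomial.sum_zsmul_prod_X_eq_sum_zsmul_esymm {σ R : Type*} [Fintype σ] [CommRing R]
    (f : ℕ → ℤ) :
    ∑ s : Finset σ, f #s • ∏ i ∈ s, (X i : MvPolynomial σ R) =
      ∑ k ∈ range (Fintype.card σ + 1), f k • esymm σ R k := by
  rw [← powerset_univ, sum_powerset, card_univ]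
  refine sum_congr rfl fun k _ => ?_
  rw [esymm, smul_sum]
  exact sum_congr rfl fun s hs => by rw [(mem_powersetCard.mp hs).2]

open Finset in
theorem Finset.sum_range_succ_one_sub_zsmul {M : Type*} [AddCommGroup M] (g : ℕ → M) (d : ℕ) :
    ∑ k ∈ range (d + 1), (1 - (k : ℤ)) • g k = g 0 - ∑ k ∈ Icc 2 d, ((k : ℤ) - 1) • g k := by
  have hsub : ∑ k ∈ Icc 2 d, (1 - (k : ℤ)) • g k =
      ∑ k ∈ (range (d + 1)).erase 0, (1 - (k : ℤ)) • g k := by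
    apply sum_subset
    · intro k hk
      simp only [mem_Icc, mem_erase, mem_range] at hk ⊢
      omega
    · intro k hk hk'
      simp only [mem_Icc, mem_erase, mem_range] at hk hk'
      obtain rfl : k = 1 := by omega
      simp
  rw [← add_sum_erase _ _ (mem_range.mpr d.succ_pos), ← hsub]
  simp only [Nat.cast_zero, sub_zero, one_zsmul, sub_eq_add_neg (g 0), ← sum_neg_distrib,
    ← neg_zsmul, neg_sub]

/-- For the `d×d` matrix `A` with off-diagonal entries `1` and diagonal `0`,
`det(I - diag(x)·A) = 1 - ∑_{i=2}^d (i-1) e_i(x_1,…,x_d)`. -/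
theorem det_diag_adjK (d : ℕ) :
    Matrix.det
      ((1 : Matrix (Fin d) (Fin d) (MvPolynomial (Fin d) ℤ)) -
        Matrix.diagonal (fun i => X i) *
          Matrix.of (fun i j => if i = j then 0 else 1)) =
      1 - ∑ i ∈ Finset.Icc 2 d, ((i : ℤ) - 1) • MvPolynomial.esymm (Fin d) ℤ i := by
  set J : Matrix (Fin d) (Fin d) (MvPolynomial (Fin d) ℤ) := Matrix.of fun _ _ => 1
  have hA : (Matrix.of fun i j => if i = j then 0 else 1) = -(1 - J) := by
    ext i j
    by_cases h : i = j <;> simp [J, h]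
  have hminor (s : Finset (Fin d)) :
      ((1 - J).submatrix (↑) (↑) : Matrix s s _) = 1 - Matrix.of fun _ _ => 1 := by
    ext i j
    simp only [J, Matrix.submatrix_apply, Matrix.sub_apply, Matrix.one_apply, Subtype.ext_iff,
      Matrix.of_apply]
  rw [hA, Matrix.mul_neg, sub_neg_eq_add, Matrix.det_one_add_diagonal_mul]
  simp only [hminor, Matrix.det_one_sub_of_one, Fintype.card_coe]
  calc ∑ s : Finset (Fin d), (∏ i ∈ s, X i) * (1 - (s.card : MvPolynomial (Fin d) ℤ))
      = ∑ s : Finset (Fin d), (1 - (s.card : ℤ)) • ∏ i ∈ s, X i := by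
        simp only [zsmul_eq_mul, Int.cast_sub, Int.cast_one, Int.cast_natCast, mul_comm]
    _ = ∑ k ∈ Finset.range (d + 1), (1 - (k : ℤ)) • esymm (Fin d) ℤ k := by
        rw [sum_zsmul_prod_X_eq_sum_zsmul_esymm (σ := Fin d) (R := ℤ) fun k => 1 - (k : ℤ),
          Fintype.card_fin]
    _ = _ := by rw [Finset.sum_range_succ_one_sub_zsmul, esymm_zero]
end

section
/- The multivariate generating function ∑_{m_1,...,m_d ≥ 0} c(m_1,...,m_d) x_1^{m_1}...x_d^{m_d} equals (∏_{i=1}^d x_i) · (∏_{i=1}^d (1-x_i))^{-1} · (1 - ∑_{i=2}^d (i-1) e_i(x_1,...,x_d))^{-1}, where e_i is the elementary symmetric polynomial of degree i. -/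
open MvPolynomial Finset

/-- `c` extended by `0` when some `m_i = 0`. -/
noncomputable def cFull (d : ℕ) (m : Fin d → ℕ) : ℤ :=
  if ∀ i, 1 ≤ m i then c d m else 0

/-- The generating function `∑ c(m) x^m` as a formal power series. -/
noncomputable def Cser (d : ℕ) : MvPowerSeries (Fin d) ℤ :=
  fun e => cFull d (fun i => e i)

/-!
Expanding each factor of `cPoly` shows `c(m) = ∑_{k < m} f(k)` (componentwise `k_i < m_i`), where
`f(k) = [t^k] ∏ t̂_i^{k_i}` is `fC`. Hence `C = x₁⋯x_d · F · ∏ (1 - x_i)⁻¹` with `F = ∑ f(k) x^k`,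
and what remains is the case of MacMahon's Master Theorem for the matrix `J - I`:
`F · ∑_S (1 - |S|) x^S = 1`, the second factor being `1 - ∑_{i ≥ 2} (i - 1) e_i`.

For `n ≠ 0` with support `T`, the coefficient of `x^n` in that product is
`∑_{S ⊆ T} (1 - |S|) f(n - 1_S)`. Each term is the coefficient of `t^n` in `q · t^S t̂^{T∖S}` with
the common factor `q = ∏_{i ∈ T} t̂_i^{n_i - 1}`. Since `t_i + t̂_i = s := ∑ t_j`,
`∑_{S ⊆ T} (1 - |S|) t^S t̂^{T∖S} = s^{|T|} - (∑_{i ∈ T} t_i) s^{|T|-1}`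
`= (∑_{i ∉ T} t_i) s^{|T|-1}`, every monomial of which involves a variable outside `T`, so the
coefficient vanishes.
-/

section Indicator

variable {σ : Type*}

noncomputable def onesOn (S : Finset σ) : σ →₀ ℕ := ∑ i ∈ S, Finsupp.single i 1

theorem onesOn_apply [DecidableEq σ] (S : Finset σ) (i : σ) :
    onesOn S i = if i ∈ S then 1 else 0 := by
  simp [onesOn, Finsupp.finsetSum_apply, Finsupp.single_apply]

theorem onesOn_le_iff [DecidableEq σ] {S : Finset σ} {n : σ →₀ ℕ} :
    onesOn S ≤ n ↔ S ⊆ n.support := by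
  simp only [Finsupp.le_def, onesOn_apply, subset_iff, Finsupp.mem_support_iff]
  refine ⟨fun h i hi => ?_, fun h i => ?_⟩
  · have := h i
    rw [if_pos hi] at this
    omega
  · split_ifs with hi
    · exact Nat.one_le_iff_ne_zero.mpr (h hi)
    · exact Nat.zero_le _

theorem MvPolynomial.prod_X_eq_monomial_onesOn {R : Type*} [CommSemiring R] (S : Finset σ) :
    ∏ i ∈ S, (X i : MvPolynomial σ R) = monomial (onesOn S) 1 := by
  simp only [X, onesOn, monomial_sum_one]

end Indicator

noncomputable def MvPowerSeries.onesSeries (σ R : Type*) [One R] : MvPowerSeries σ R :=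
  fun _ => 1

@[simp]
theorem MvPowerSeries.coeff_onesSeries {σ R : Type*} [Semiring R] (n : σ →₀ ℕ) :
    coeff n (onesSeries σ R) = 1 := rfl

section PowersetExpansions

variable {σ : Type*} [Fintype σ] {R : Type*} [CommRing R]

theorem MvPolynomial.prod_one_sub_X [DecidableEq σ] :
    ∏ i, (1 - X i : MvPolynomial σ R) = ∑ S ∈ univ.powerset, (-1 : ℤ) ^ #S • ∏ i ∈ S, X i := by
  have : ∀ i, (1 - X i : MvPolynomial σ R) = -X i + 1 := fun i => by ring
  simp only [this, prod_add, prod_const_one, mul_one, prod_neg, zsmul_eq_mul, Int.cast_pow,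
    Int.cast_neg, Int.cast_one]

theorem MvPolynomial.one_sub_sum_smul_esymm :
    (1 - ∑ j ∈ Icc 2 (Fintype.card σ), ((j : ℤ) - 1) • esymm σ R j : MvPolynomial σ R) =
      ∑ S ∈ univ.powerset, (1 - (#S : ℤ)) • ∏ i ∈ S, X i := by
  have hpowerset : ∑ S ∈ univ.powerset, (1 - (#S : ℤ)) • ∏ i ∈ S, (X i : MvPolynomial σ R) =
      ∑ j ∈ range (Fintype.card σ + 1), (1 - (j : ℤ)) • esymm σ R j := by
    rw [sum_powerset, card_univ]
    refine sum_congr rfl fun j _ => ?_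
    rw [esymm, smul_sum]
    exact sum_congr rfl fun S hS => by rw [(mem_powersetCard.mp hS).2]
  have hvanish : ∀ j ∈ Ico 1 (Fintype.card σ + 1), j ∉ Icc 2 (Fintype.card σ) →
      (1 - (j : ℤ)) • esymm σ R j = 0 := fun j hj hj' => by
    obtain rfl : j = 1 := by simp only [mem_Ico, mem_Icc] at hj hj'; omega
    simp
  rw [hpowerset, range_eq_Ico, sum_eq_sum_Ico_succ_bot (Nat.succ_pos _),
    ← sum_subset (fun j hj => by simp only [mem_Ico, mem_Icc] at hj ⊢; omega) hvanish]
  simp only [← neg_sub (1 : ℤ), neg_smul, sum_neg_distrib, esymm_zero]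
  simp

theorem MvPowerSeries.coeff_mul_coe_sum_powerset [DecidableEq σ] (φ : MvPowerSeries σ R)
    (a : Finset σ → ℤ) (n : σ →₀ ℕ) :
    coeff n (φ * ((∑ S ∈ univ.powerset, a S • ∏ i ∈ S, MvPolynomial.X i : MvPolynomial σ R) :
      MvPowerSeries σ R)) =
      ∑ S ∈ n.support.powerset, a S • coeff (n - onesOn S) φ := by
  simp only [MvPolynomial.prod_X_eq_monomial_onesOn,
    ← MvPolynomial.coeToMvPowerSeries.ringHom_apply, map_sum, map_zsmul]
  simp only [MvPolynomial.coeToMvPowerSeries.ringHom_apply, MvPolynomial.coe_monomial, mul_sum,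
    mul_smul_comm, map_sum, map_zsmul, coeff_mul_monomial, mul_one, smul_ite, smul_zero]
  rw [← sum_filter]
  congr 1
  ext S
  simp [onesOn_le_iff]

theorem MvPowerSeries.onesSeries_mul_prod_one_sub_X [DecidableEq σ] :
    onesSeries σ R * ((∏ i, (1 - MvPolynomial.X i) : MvPolynomial σ R) : MvPowerSeries σ R) =
      1 := by
  ext n
  rw [MvPolynomial.prod_one_sub_X, coeff_mul_coe_sum_powerset, coeff_one]
  simp only [coeff_onesSeries, zsmul_one]
  rw [← Int.cast_sum, sum_powerset_neg_one_pow_card]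
  simp

end PowersetExpansions

section PowersetSums

variable {ι R : Type*} [DecidableEq ι] [CommRing R]

theorem Finset.sum_powerset_card_mul_prod_mul_prod (T : Finset ι) (f g : ι → R) :
    ∑ S ∈ T.powerset, (#S : R) * ((∏ i ∈ S, f i) * ∏ i ∈ T \ S, g i) =
      ∑ i ∈ T, f i * ∏ j ∈ T.erase i, (f j + g j) := by
  induction T using Finset.induction_on with
  | empty => simp
  | insert a T ha ih =>
    set P := fun S => (∏ i ∈ S, f i) * ∏ i ∈ T \ S, g i
    have hterm : ∀ S ∈ T.powerset, a ∉ S := fun S hS haS => ha (mem_powerset.mp hS haS)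
    calc _ = ∑ S ∈ T.powerset, ((f a + g a) * ((#S : R) * P S) + f a * P S) := by
          rw [sum_powerset_insert ha, ← sum_add_distrib]
          refine sum_congr rfl fun S hS => ?_
          rw [insert_sdiff_of_notMem _ (hterm S hS), insert_sdiff_insert,
            sdiff_insert_of_notMem ha, prod_insert (fun h => ha (mem_sdiff.mp h).1),
            prod_insert (hterm S hS), card_insert_of_notMem (hterm S hS)]
          push_cast
          ring
      _ = f a * ∏ j ∈ T, (f j + g j) +
            ∑ i ∈ T, f i * ((f a + g a) * ∏ j ∈ T.erase i, (f j + g j)) := by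
          rw [sum_add_distrib, ← mul_sum, ← mul_sum, ih, prod_add, mul_sum, mul_sum, add_comm]
          simp only [mul_left_comm]
      _ = _ := by
          rw [sum_insert ha, erase_insert ha]
          congr 1
          refine sum_congr rfl fun i hi => ?_
          rw [erase_insert_of_ne (ne_of_mem_of_not_mem hi ha).symm,
            prod_insert fun h => ha (mem_erase.mp h).2]

theorem Finset.sum_powerset_one_sub_card_mul_prod_mul_prod
    {T : Finset ι} (hT : T.Nonempty) (f g : ι → R) {s : R} (hfg : ∀ i ∈ T, f i + g i = s) :
    ∑ S ∈ T.powerset, (1 - (#S : R)) * ((∏ i ∈ S, f i) * ∏ i ∈ T \ S, g i) =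
      (s - ∑ i ∈ T, f i) * s ^ (#T - 1) := by
  have herase : ∀ i ∈ T, ∏ j ∈ T.erase i, (f j + g j) = s ^ (#T - 1) := fun i hi => by
    rw [prod_congr rfl fun j hj => hfg j (mem_of_mem_erase hj), prod_const, card_erase_of_mem hi]
  obtain ⟨k, hk⟩ : ∃ k, #T = k + 1 := Nat.exists_eq_add_one.mpr hT.card_pos
  simp only [sub_mul, one_mul, sum_sub_distrib, ← prod_add, sum_powerset_card_mul_prod_mul_prod,
    prod_congr rfl hfg, prod_const, sum_mul]
  rw [sum_congr rfl fun i hi => by rw [herase i hi], hk, pow_succ', Nat.add_sub_cancel]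

end PowersetSums

theorem Finsupp.sum_antidiagonal_eq_sum_piFinset {σ M : Type*} [Fintype σ] [DecidableEq σ]
    [AddCommMonoid M] (N : σ →₀ ℕ) (g : (σ → ℕ) → M) :
    ∑ p ∈ antidiagonal N, g p.1 = ∑ k ∈ Fintype.piFinset fun i => range (N i + 1), g k := by
  refine sum_nbij' (fun p => ⇑p.1)
    (fun k => (equivFunOnFinite.symm k, N - equivFunOnFinite.symm k)) ?_ ?_ ?_ ?_ (fun _ _ => rfl)
  · intro p hp
    simp only [Fintype.mem_piFinset, mem_range, Order.lt_add_one_iff]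
    rw [← HasAntidiagonal.mem_antidiagonal.mp hp]
    exact fun i => Nat.le_add_right _ _
  · intro k hk
    simp only [Fintype.mem_piFinset, mem_range, Order.lt_add_one_iff,
      HasAntidiagonal.mem_antidiagonal] at hk ⊢
    exact add_tsub_cancel_of_le hk
  · intro p hp
    obtain rfl := HasAntidiagonal.mem_antidiagonal.mp hp
    simp
  · intro k _
    simp

noncomputable def Fser (d : ℕ) : MvPowerSeries (Fin d) ℤ :=
  fun e => fC d e

section GeneratingFunctions

variable {d : ℕ}

@[simp]
theorem coeff_Cser (n : Fin d →₀ ℕ) : MvPowerSeries.coeff n (Cser d) = cFull d n := rfl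

@[simp]
theorem coeff_Fser (n : Fin d →₀ ℕ) : MvPowerSeries.coeff n (Fser d) = fC d n := rfl

theorem fPoly_eq_prod_that (k : Fin d → ℕ) : fPoly d k = ∏ i, that d i ^ k i := by
  refine prod_congr rfl fun i _ => ?_
  rw [that, ← add_sum_erase _ _ (mem_univ i), add_sub_cancel_left]

theorem fPoly_add (k l : Fin d → ℕ) : fPoly d (k + l) = fPoly d k * fPoly d l := by
  simp only [fPoly_eq_prod_that, Pi.add_apply, pow_add, prod_mul_distrib]

theorem fPoly_onesOn (S : Finset (Fin d)) : fPoly d (onesOn S) = ∏ i ∈ S, that d i := by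
  simp only [fPoly_eq_prod_that, onesOn_apply, pow_ite, pow_one, pow_zero, prod_ite_mem,
    univ_inter]

theorem fC_coe (k : Fin d →₀ ℕ) : fC d k = coeff k (fPoly d k) := by
  rw [fC, Finsupp.equivFunOnFinite_symm_coe]

theorem fC_zero : fC d 0 = 1 := by
  rw [← Finsupp.coe_zero, fC_coe]
  simp [fPoly]

theorem c_eq_sum_fC (m : Fin d → ℕ) :
    c d m = ∑ k ∈ Fintype.piFinset fun i => range (m i), fC d k := by
  rw [c, cPoly, prod_univ_sum, coeff_sum]
  refine sum_congr rfl fun k hk => ?_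
  simp only [Fintype.mem_piFinset, mem_range] at hk
  rw [prod_mul_distrib, ← fPoly_eq_prod_that, mul_comm, prod_X_pow, coeff_monomial_mul',
    if_pos (Finsupp.le_def.mpr fun i => by simp), one_mul, fC]
  congr
  ext i
  have := hk i
  simp only [Finsupp.coe_tsub, Pi.sub_apply, Finsupp.indicator_apply, dif_pos (mem_univ i),
    Finsupp.equivFunOnFinite_symm_apply_apply]
  omega

theorem Cser_eq_prod_X_mul_Fser_mul_onesSeries :
    Cser d = ((∏ i, X i : MvPolynomial (Fin d) ℤ) : MvPowerSeries (Fin d) ℤ) *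
      (Fser d * MvPowerSeries.onesSeries _ ℤ) := by
  ext n
  rw [prod_X_eq_monomial_onesOn, coe_monomial, MvPowerSeries.coeff_monomial_mul,
    MvPowerSeries.coeff_mul, coeff_Cser, cFull, c_eq_sum_fC]
  simp only [coeff_Fser, MvPowerSeries.coeff_onesSeries, mul_one, one_mul, onesOn_le_iff,
    Finsupp.sum_antidiagonal_eq_sum_piFinset (g := fC d)]
  have hpos : univ ⊆ n.support ↔ ∀ i, 1 ≤ n i := by
    simp [subset_iff, Nat.one_le_iff_ne_zero]
  by_cases h : ∀ i, 1 ≤ n i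
  · rw [if_pos h, if_pos (hpos.mpr h)]
    congr! with i
    have := h i
    simp only [Finsupp.tsub_apply, onesOn_apply, if_pos (mem_univ i)]
    omega
  · rw [if_neg h, if_neg (mt hpos.mp h)]

theorem X_add_that (i : Fin d) : X i + that d i = ∑ j, X j := by
  rw [that, add_sub_cancel]

theorem fC_sub_onesOn {n : Fin d →₀ ℕ} {S : Finset (Fin d)} (hS : S ⊆ n.support) :
    fC d ⇑(n - onesOn S) = coeff n (fPoly d ⇑(n - onesOn n.support) *
      ((∏ i ∈ S, X i) * ∏ i ∈ n.support \ S, that d i)) := by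
  have hsplit : n - onesOn S = (n - onesOn n.support) + onesOn (n.support \ S) := by
    ext i
    have := @hS i
    simp only [Finsupp.tsub_apply, Finsupp.coe_add, Pi.add_apply, onesOn_apply, mem_sdiff,
      Finsupp.mem_support_iff] at this ⊢
    grind
  rw [fC_coe, prod_X_eq_monomial_onesOn, mul_left_comm, coeff_monomial_mul',
    if_pos (onesOn_le_iff.mpr hS), one_mul, ← fPoly_onesOn, ← fPoly_add, hsplit, Finsupp.coe_add]

theorem sum_powerset_support_fC_eq_zero {n : Fin d →₀ ℕ} (hn : n ≠ 0) :
    ∑ S ∈ n.support.powerset, (1 - #S : ℤ) * fC d ⇑(n - onesOn S) = 0 := by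
  set T := n.support
  set q := fPoly d ⇑(n - onesOn T)
  calc _ = coeff n (q * ∑ S ∈ T.powerset,
        (1 - (#S : MvPolynomial (Fin d) ℤ)) * ((∏ i ∈ S, X i) * ∏ i ∈ T \ S, that d i)) := by
        rw [mul_sum, coeff_sum]
        refine sum_congr rfl fun S hS => ?_
        rw [fC_sub_onesOn (mem_powerset.mp hS), ← coeff_C_mul, map_sub, map_one, map_natCast,
          mul_left_comm]
    _ = coeff n (q * ((∑ i, X i - ∑ i ∈ T, X i) * (∑ i, X i) ^ (#T - 1))) := by
        rw [sum_powerset_one_sub_card_mul_prod_mul_prod (Finsupp.support_nonempty_iff.mpr hn) X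
          (that d) fun i _ => X_add_that i]
    _ = 0 := by
        rw [← sum_sdiff (subset_univ T), add_sub_cancel_right, sum_mul, mul_sum, coeff_sum]
        refine sum_eq_zero fun i hi => ?_
        rw [mul_left_comm, coeff_X_mul', if_neg (mem_sdiff.mp hi).2]

theorem Fser_mul_one_sub_sum_smul_esymm :
    Fser d * ((1 - ∑ i ∈ Icc 2 d, ((i : ℤ) - 1) • esymm (Fin d) ℤ i :
      MvPolynomial (Fin d) ℤ) : MvPowerSeries (Fin d) ℤ) = 1 := by
  have h := one_sub_sum_smul_esymm (σ := Fin d) (R := ℤ)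
  rw [Fintype.card_fin] at h
  ext n
  rw [h, MvPowerSeries.coeff_mul_coe_sum_powerset, MvPowerSeries.coeff_one]
  simp only [coeff_Fser, smul_eq_mul]
  split_ifs with hn
  · subst hn
    simp [fC_zero]
  · exact sum_powerset_support_fC_eq_zero hn

end GeneratingFunctions

/-- `∑_m c(m_1,…,m_d) x_1^{m_1}⋯x_d^{m_d}
  = (∏ x_i) (∏ (1-x_i))⁻¹ (1 - ∑_{i=2}^d (i-1) e_i(x))⁻¹`, stated by multiplying
through by the two (invertible) denominators. -/
theorem gf_c_eq (d : ℕ) :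
    Cser d *
        (((∏ i, (1 - X i)) *
            (1 - ∑ i ∈ Finset.Icc 2 d, ((i : ℤ) - 1) • MvPolynomial.esymm (Fin d) ℤ i) :
          MvPolynomial (Fin d) ℤ) : MvPowerSeries (Fin d) ℤ) =
      ((∏ i, X i : MvPolynomial (Fin d) ℤ) : MvPowerSeries (Fin d) ℤ) := by
  have hFB := Fser_mul_one_sub_sum_smul_esymm (d := d)
  have hEA := MvPowerSeries.onesSeries_mul_prod_one_sub_X (σ := Fin d) (R := ℤ)
  rw [MvPolynomial.coe_mul, Cser_eq_prod_X_mul_Fser_mul_onesSeries]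
  grind
end

section
/- For d = 2, the generating function ∑_{m_1,m_2 ≥ 0} c(m_1,m_2) x^{m_1} y^{m_2} equals xy / ((1-x)(1-y)(1-xy)). -/
open MvPolynomial Finset

/-- The generating function `∑ c(m_1,m_2) x^{m_1} y^{m_2}` for `d = 2`. -/
noncomputable def Cser2 : MvPowerSeries (Fin 2) ℤ :=
  fun e => cFull 2 (fun i => e i)

/-!
Only the diagonal products `t₂ᵏ t₁^{m₁-1-k} · t₁ˡ t₂^{m₂-1-l}` with `k = l` hit the monomial
`t₁^{m₁-1} t₂^{m₂-1}`, so `c(m₁, m₂) = min m₁ m₂`, which also holds when some `mᵢ = 0`.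
Multiplying `∑ min(a, b) xᵃ yᵇ` successively by `1 - x`, `1 - y` and `1 - xy` telescopes the
coefficients to `[1 ≤ a ≤ b]`, then `[a = b ≥ 1]`, and finally `[a = b = 1]`.
-/

lemma that_two_zero : that 2 0 = X 1 := by
  rw [that, Fin.sum_univ_two]; ring

lemma that_two_one : that 2 1 = X 0 := by
  rw [that, Fin.sum_univ_two]; ring

lemma coeff_cPoly_two_term (m : Fin 2 → ℕ) {k l : ℕ} (hk : k < m 0) (hl : l < m 1) :
    coeff (Finsupp.equivFunOnFinite.symm fun i => m i - 1)
        (X 1 ^ k * X 0 ^ (m 0 - 1 - k) * (X 0 ^ l * X 1 ^ (m 1 - 1 - l)) :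
          MvPolynomial (Fin 2) ℤ) =
      if k = l then 1 else 0 := by
  simp only [X_pow_eq_monomial, monomial_mul, coeff_monomial, mul_one]
  congr 1
  simp only [eq_iff_iff, Finsupp.ext_iff, Fin.forall_fin_two, Finsupp.add_apply,
    Finsupp.single_apply, Finsupp.coe_equivFunOnFinite_symm, one_ne_zero, zero_ne_one, if_true,
    if_false]
  omega

lemma c_two (m : Fin 2 → ℕ) : c 2 m = min (m 0) (m 1) := by
  rw [c, cPoly, Fin.prod_univ_two, that_two_zero, that_two_one, Finset.sum_mul_sum]
  simp_rw [coeff_sum]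
  rw [Finset.sum_congr rfl fun k hk => Finset.sum_congr rfl fun l hl =>
    coeff_cPoly_two_term m (mem_range.1 hk) (mem_range.1 hl)]
  simp only [Finset.sum_ite_eq, mem_range, Finset.sum_boole]
  have hrange : {k ∈ range (m 0) | k < m 1} = range (min (m 0) (m 1)) := by
    ext; simp
  rw [hrange, card_range]

lemma cFull_two (m : Fin 2 → ℕ) : cFull 2 m = min (m 0) (m 1) := by
  rw [cFull, c_two]
  split_ifs with h
  · rfl
  · rw [Fin.forall_fin_two] at h
    omega

lemma coeff_Cser2 (e : Fin 2 →₀ ℕ) : MvPowerSeries.coeff e Cser2 = min (e 0) (e 1) :=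
  cFull_two _

namespace MvPowerSeries

lemma coeff_mul_one_sub_monomial {σ R : Type*} [Ring R] (f : MvPowerSeries σ R)
    (e n : σ →₀ ℕ) :
    coeff n (f * (1 - monomial e 1)) = coeff n f - if e ≤ n then coeff (n - e) f else 0 := by
  rw [mul_sub, mul_one, map_sub, coeff_mul_monomial]
  simp only [mul_one]

end MvPowerSeries

open MvPowerSeries

noncomputable def upperTriangleSeries : MvPowerSeries (Fin 2) ℤ :=
  fun e => if 1 ≤ e 0 ∧ e 0 ≤ e 1 then 1 else 0

noncomputable def diagonalSeries : MvPowerSeries (Fin 2) ℤ :=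
  fun e => if e 0 = e 1 ∧ 1 ≤ e 0 then 1 else 0

lemma coeff_upperTriangleSeries (e : Fin 2 →₀ ℕ) :
    coeff e upperTriangleSeries = if 1 ≤ e 0 ∧ e 0 ≤ e 1 then 1 else 0 :=
  rfl

lemma coeff_diagonalSeries (e : Fin 2 →₀ ℕ) :
    coeff e diagonalSeries = if e 0 = e 1 ∧ 1 ≤ e 0 then 1 else 0 :=
  rfl

lemma Cser2_mul_one_sub_X_zero : Cser2 * (1 - MvPowerSeries.X 0) = upperTriangleSeries := by
  ext n
  rw [MvPowerSeries.X_def, coeff_mul_one_sub_monomial, coeff_Cser2, coeff_Cser2,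
    coeff_upperTriangleSeries]
  simp only [Finsupp.single_le_iff, Finsupp.coe_tsub, Pi.sub_apply, Finsupp.single_apply]
  split_ifs <;> omega

lemma upperTriangleSeries_mul_one_sub_X_one :
    upperTriangleSeries * (1 - MvPowerSeries.X 1) = diagonalSeries := by
  ext n
  rw [MvPowerSeries.X_def, coeff_mul_one_sub_monomial, coeff_upperTriangleSeries,
    coeff_upperTriangleSeries, coeff_diagonalSeries]
  simp only [Finsupp.single_le_iff, Finsupp.coe_tsub, Pi.sub_apply, Finsupp.single_apply]
  split_ifs <;> omega

lemma diagonalSeries_mul_one_sub_X_mul_X :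
    diagonalSeries * (1 - MvPowerSeries.X 0 * MvPowerSeries.X 1) =
      MvPowerSeries.X 0 * MvPowerSeries.X 1 := by
  ext n
  rw [MvPowerSeries.X_def, MvPowerSeries.X_def, monomial_mul_monomial, one_mul,
    coeff_mul_one_sub_monomial, coeff_diagonalSeries, coeff_diagonalSeries,
    MvPowerSeries.coeff_monomial]
  simp only [Finsupp.le_def, Finsupp.ext_iff, Fin.forall_fin_two, Finsupp.coe_add,
    Pi.add_apply, Finsupp.coe_tsub, Pi.sub_apply, Finsupp.single_apply]
  split_ifs <;> omega

/-- `∑ c(m_1,m_2) x^{m_1} y^{m_2} = xy / ((1-x)(1-y)(1-xy))`, stated by multiplying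
through by the (invertible) denominator.  Here `x = X 0`, `y = X 1`. -/
theorem gf_c_two :
    Cser2 * ((1 - MvPowerSeries.X 0) * (1 - MvPowerSeries.X 1) *
        (1 - MvPowerSeries.X 0 * MvPowerSeries.X 1)) =
      MvPowerSeries.X 0 * MvPowerSeries.X 1 := by
  rw [← mul_assoc, ← mul_assoc, Cser2_mul_one_sub_X_zero, upperTriangleSeries_mul_one_sub_X_one,
    diagonalSeries_mul_one_sub_X_mul_X]
end

section
/- For d = 3 and nonnegative integers k_1, k_2, k_3, let f(k_1,k_2,k_3) be the coefficient of t_1^{k_1}t_2^{k_2}t_3^{k_3} in (t_2+t_3)^{k_1}(t_1+t_3)^{k_2}(t_1+t_2)^{k_3}; then f(k_1,k_2,k_3) is the coefficient of x_1^{k_1}x_2^{k_2}x_3^{k_3} in 1/(1 - x_1x_2 - x_1x_3 - x_2x_3 - 2x_1x_2x_3). -/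
open MvPolynomial Finset

noncomputable def fs3 (a b c : ℕ) : Fin 3 →₀ ℕ := Finsupp.equivFunOnFinite.symm ![a, b, c]

noncomputable def g3 (a b c : ℕ) : ℤ :=
  MvPolynomial.coeff (fs3 a b c)
    ((X 1 + X 2 : MvPolynomial (Fin 3) ℤ) ^ a * (X 0 + X 2) ^ b * (X 0 + X 1) ^ c)

lemma fs3_eq01 (a b c : ℕ) :
    fs3 (a+1) (b+1) c = Finsupp.single 0 1 + (Finsupp.single 1 1 + fs3 a b c) := by
  ext i; fin_cases i <;> simp [fs3, Finsupp.single_apply, -Finsupp.coe_add, Finsupp.add_apply] <;> omega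

lemma fs3_eq02 (a b c : ℕ) :
    fs3 (a+1) b (c+1) = Finsupp.single 0 1 + (Finsupp.single 2 1 + fs3 a b c) := by
  ext i; fin_cases i <;> simp [fs3, Finsupp.single_apply, -Finsupp.coe_add, Finsupp.add_apply] <;> omega

lemma fs3_eq12 (a b c : ℕ) :
    fs3 a (b+1) (c+1) = Finsupp.single 1 1 + (Finsupp.single 2 1 + fs3 a b c) := by
  ext i; fin_cases i <;> simp [fs3, Finsupp.single_apply, -Finsupp.coe_add, Finsupp.add_apply] <;> omega

lemma fs3_eq012 (a b c : ℕ) :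
    fs3 (a+1) (b+1) (c+1) =
      Finsupp.single 0 1 + (Finsupp.single 1 1 + (Finsupp.single 2 1 + fs3 a b c)) := by
  ext i; fin_cases i <;> simp [fs3, Finsupp.single_apply, -Finsupp.coe_add, Finsupp.add_apply] <;> omega

lemma coeff_shift01 (a b c : ℕ) (R : MvPolynomial (Fin 3) ℤ) :
    MvPolynomial.coeff (fs3 (a+1) (b+1) c) (X 0 * X 1 * R) =
      MvPolynomial.coeff (fs3 a b c) R := by
  rw [fs3_eq01, mul_assoc, coeff_X_mul, coeff_X_mul]

lemma coeff_shift02 (a b c : ℕ) (R : MvPolynomial (Fin 3) ℤ) :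
    MvPolynomial.coeff (fs3 (a+1) b (c+1)) (X 0 * X 2 * R) =
      MvPolynomial.coeff (fs3 a b c) R := by
  rw [fs3_eq02, mul_assoc, coeff_X_mul, coeff_X_mul]

lemma coeff_shift12 (a b c : ℕ) (R : MvPolynomial (Fin 3) ℤ) :
    MvPolynomial.coeff (fs3 a (b+1) (c+1)) (X 1 * X 2 * R) =
      MvPolynomial.coeff (fs3 a b c) R := by
  rw [fs3_eq12, mul_assoc, coeff_X_mul, coeff_X_mul]

lemma coeff_shift012 (a b c : ℕ) (R : MvPolynomial (Fin 3) ℤ) :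
    MvPolynomial.coeff (fs3 (a+1) (b+1) (c+1)) (X 0 * X 1 * X 2 * R) =
      MvPolynomial.coeff (fs3 a b c) R := by
  rw [fs3_eq012, mul_assoc, mul_assoc, coeff_X_mul, coeff_X_mul, coeff_X_mul]

lemma coeff_kill (m : Fin 3 →₀ ℕ) (i : Fin 3) (h : m i = 0) (R : MvPolynomial (Fin 3) ℤ) :
    MvPolynomial.coeff m (X i * R) = 0 := by
  classical
  rw [coeff_X_mul', if_neg]
  simp [Finsupp.mem_support_iff, h]

lemma g3_rec (a b c : ℕ) :
    g3 (a+1) (b+1) (c+1) = g3 a b (c+1) + g3 a (b+1) c + g3 (a+1) b c + 2 * g3 a b c := by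
  have hp : ((X 1 + X 2 : MvPolynomial (Fin 3) ℤ)) ^ (a+1) * (X 0 + X 2) ^ (b+1) * (X 0 + X 1) ^ (c+1)
      = X 0 * X 1 * ((X 1 + X 2) ^ a * (X 0 + X 2) ^ b * (X 0 + X 1) ^ (c+1))
      + X 0 * X 2 * ((X 1 + X 2) ^ a * (X 0 + X 2) ^ (b+1) * (X 0 + X 1) ^ c)
      + X 1 * X 2 * ((X 1 + X 2) ^ (a+1) * (X 0 + X 2) ^ b * (X 0 + X 1) ^ c)
      + (X 0 * X 1 * X 2 * ((X 1 + X 2) ^ a * (X 0 + X 2) ^ b * (X 0 + X 1) ^ c)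
        + X 0 * X 1 * X 2 * ((X 1 + X 2) ^ a * (X 0 + X 2) ^ b * (X 0 + X 1) ^ c)) := by
    ring
  show MvPolynomial.coeff _ _ = _
  rw [hp, coeff_add, coeff_add, coeff_add, coeff_add, coeff_shift01, coeff_shift02,
    coeff_shift12, coeff_shift012]
  rw [show g3 a b (c+1) + g3 a (b+1) c + g3 (a+1) b c + 2 * g3 a b c
      = g3 a b (c+1) + g3 a (b+1) c + g3 (a+1) b c + (g3 a b c + g3 a b c) by ring]
  rfl

lemma g3_rec_c0 (a b : ℕ) : g3 (a+1) (b+1) 0 = g3 a b 0 := by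
  have hp : ((X 1 + X 2 : MvPolynomial (Fin 3) ℤ)) ^ (a+1) * (X 0 + X 2) ^ (b+1) * (X 0 + X 1) ^ 0
      = X 0 * X 1 * ((X 1 + X 2) ^ a * (X 0 + X 2) ^ b * (X 0 + X 1) ^ 0)
      + X 2 * ((X 0 + X 1 + X 2) * ((X 1 + X 2) ^ a * (X 0 + X 2) ^ b * (X 0 + X 1) ^ 0)) := by
    ring
  show MvPolynomial.coeff _ _ = _
  rw [hp, coeff_add, coeff_shift01, coeff_kill _ 2 (by simp [fs3]) _, add_zero]
  rfl

lemma g3_rec_a0 (b c : ℕ) : g3 0 (b+1) (c+1) = g3 0 b c := by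
  have hp : ((X 1 + X 2 : MvPolynomial (Fin 3) ℤ)) ^ 0 * (X 0 + X 2) ^ (b+1) * (X 0 + X 1) ^ (c+1)
      = X 1 * X 2 * ((X 1 + X 2) ^ 0 * (X 0 + X 2) ^ b * (X 0 + X 1) ^ c)
      + X 0 * ((X 0 + X 1 + X 2) * ((X 1 + X 2) ^ 0 * (X 0 + X 2) ^ b * (X 0 + X 1) ^ c)) := by
    ring
  show MvPolynomial.coeff _ _ = _
  rw [hp, coeff_add, coeff_shift12, coeff_kill _ 0 (by simp [fs3]) _, add_zero]
  rfl

lemma g3_rec_b0 (a c : ℕ) : g3 (a+1) 0 (c+1) = g3 a 0 c := by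
  have hp : ((X 1 + X 2 : MvPolynomial (Fin 3) ℤ)) ^ (a+1) * (X 0 + X 2) ^ 0 * (X 0 + X 1) ^ (c+1)
      = X 0 * X 2 * ((X 1 + X 2) ^ a * (X 0 + X 2) ^ 0 * (X 0 + X 1) ^ c)
      + X 1 * ((X 0 + X 1 + X 2) * ((X 1 + X 2) ^ a * (X 0 + X 2) ^ 0 * (X 0 + X 1) ^ c)) := by
    ring
  show MvPolynomial.coeff _ _ = _
  rw [hp, coeff_add, coeff_shift02, coeff_kill _ 1 (by simp [fs3]) _, add_zero]
  rfl

lemma g3_vars_kill (p : MvPolynomial (Fin 3) ℤ) (m : Fin 3 →₀ ℕ) (i : Fin 3)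
    (hm : m i ≠ 0) (hv : i ∉ p.vars) : MvPolynomial.coeff m p = 0 := by
  by_contra h
  exact hv ((mem_vars i).mpr ⟨m, MvPolynomial.mem_support_iff.mpr h, Finsupp.mem_support_iff.mpr hm⟩)

lemma g3_a00 (a : ℕ) : g3 (a+1) 0 0 = 0 := by
  show MvPolynomial.coeff _ _ = 0
  simp only [pow_zero, mul_one]
  refine g3_vars_kill _ _ 0 (by simp [fs3]) fun h => ?_
  have h1 := vars_pow (X 1 + X 2 : MvPolynomial (Fin 3) ℤ) (a+1) h
  have h2 := vars_add_subset (X 1 : MvPolynomial (Fin 3) ℤ) (X 2) h1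
  simp [vars_X] at h2

lemma g3_0b0 (b : ℕ) : g3 0 (b+1) 0 = 0 := by
  show MvPolynomial.coeff _ _ = 0
  simp only [pow_zero, mul_one, one_mul]
  refine g3_vars_kill _ _ 1 (by simp [fs3]) fun h => ?_
  have h1 := vars_pow (X 0 + X 2 : MvPolynomial (Fin 3) ℤ) (b+1) h
  have h2 := vars_add_subset (X 0 : MvPolynomial (Fin 3) ℤ) (X 2) h1
  simp [vars_X] at h2

lemma g3_00c (c : ℕ) : g3 0 0 (c+1) = 0 := by
  show MvPolynomial.coeff _ _ = 0
  simp only [pow_zero, mul_one, one_mul]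
  refine g3_vars_kill _ _ 2 (by simp [fs3]) fun h => ?_
  have h1 := vars_pow (X 0 + X 1 : MvPolynomial (Fin 3) ℤ) (c+1) h
  have h2 := vars_add_subset (X 0 : MvPolynomial (Fin 3) ℤ) (X 1) h1
  simp [vars_X] at h2

lemma g3_000 : g3 0 0 0 = 1 := by
  show MvPolynomial.coeff _ _ = 1
  have h : fs3 0 0 0 = 0 := by ext i; fin_cases i <;> simp [fs3]
  simp [h]

lemma g3_key (a b c : ℕ) :
    g3 a b c = (if 1 ≤ a ∧ 1 ≤ b then g3 (a-1) (b-1) c else 0)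
      + (if 1 ≤ a ∧ 1 ≤ c then g3 (a-1) b (c-1) else 0)
      + (if 1 ≤ b ∧ 1 ≤ c then g3 a (b-1) (c-1) else 0)
      + 2 * (if 1 ≤ a ∧ 1 ≤ b ∧ 1 ≤ c then g3 (a-1) (b-1) (c-1) else 0)
      + (if a = 0 ∧ b = 0 ∧ c = 0 then 1 else 0) := by
  match a, b, c with
  | 0, 0, 0 => simp [g3_000]
  | a+1, 0, 0 => simp [g3_a00]
  | 0, b+1, 0 => simp [g3_0b0]
  | 0, 0, c+1 => simp [g3_00c]
  | a+1, b+1, 0 => simp [g3_rec_c0]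
  | a+1, 0, c+1 => simp [g3_rec_b0]
  | 0, b+1, c+1 => simp [g3_rec_a0]
  | a+1, b+1, c+1 => simp [g3_rec]

lemma fC_eq_g3 (k : Fin 3 → ℕ) : fC 3 k = g3 (k 0) (k 1) (k 2) := by
  have e0 : (Finset.univ.erase (0 : Fin 3)) = {1, 2} := by decide
  have e1 : (Finset.univ.erase (1 : Fin 3)) = {0, 2} := by decide
  have e2 : (Finset.univ.erase (2 : Fin 3)) = {0, 1} := by decide
  have hk : ![k 0, k 1, k 2] = k := by funext i; fin_cases i <;> rfl
  rw [fC, fPoly, Fin.prod_univ_three, e0, e1, e2,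
    Finset.sum_pair (by decide : (1 : Fin 3) ≠ 2),
    Finset.sum_pair (by decide : (0 : Fin 3) ≠ 2),
    Finset.sum_pair (by decide : (0 : Fin 3) ≠ 1)]
  rw [g3, fs3, hk]

/-- The generating function `∑ f(k_1,k_2,k_3) x_1^{k_1}x_2^{k_2}x_3^{k_3}` for `d = 3`. -/
noncomputable def Fser3 : MvPowerSeries (Fin 3) ℤ :=
  fun e => fC 3 (fun i => e i)

/-- `f(k_1,k_2,k_3)` is the coefficient of `x_1^{k_1}x_2^{k_2}x_3^{k_3}` in
`1/(1 - x_1x_2 - x_1x_3 - x_2x_3 - 2x_1x_2x_3)`, stated by multiplying through by the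
(invertible) denominator.  Here `x_i = X i`. -/
theorem gf_f_three :
    Fser3 * (1 - MvPowerSeries.X 0 * MvPowerSeries.X 1
        - MvPowerSeries.X 0 * MvPowerSeries.X 2
        - MvPowerSeries.X 1 * MvPowerSeries.X 2
        - 2 * (MvPowerSeries.X 0 * MvPowerSeries.X 1 * MvPowerSeries.X 2)) = 1 := by
  apply MvPowerSeries.ext; intro n
  have hF : ∀ d : Fin 3 →₀ ℕ, MvPowerSeries.coeff d Fser3 = g3 (d 0) (d 1) (d 2) :=
    fun d => by rw [MvPowerSeries.coeff_apply]; exact fC_eq_g3 _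
  have hA : (MvPowerSeries.X 0 * MvPowerSeries.X 1 : MvPowerSeries (Fin 3) ℤ)
      = MvPowerSeries.monomial (Finsupp.single 0 1 + Finsupp.single 1 1) 1 := by
    rw [MvPowerSeries.X_def, MvPowerSeries.X_def, MvPowerSeries.monomial_mul_monomial, one_mul]
  have hB : (MvPowerSeries.X 0 * MvPowerSeries.X 2 : MvPowerSeries (Fin 3) ℤ)
      = MvPowerSeries.monomial (Finsupp.single 0 1 + Finsupp.single 2 1) 1 := by
    rw [MvPowerSeries.X_def, MvPowerSeries.X_def, MvPowerSeries.monomial_mul_monomial, one_mul]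
  have hC : (MvPowerSeries.X 1 * MvPowerSeries.X 2 : MvPowerSeries (Fin 3) ℤ)
      = MvPowerSeries.monomial (Finsupp.single 1 1 + Finsupp.single 2 1) 1 := by
    rw [MvPowerSeries.X_def, MvPowerSeries.X_def, MvPowerSeries.monomial_mul_monomial, one_mul]
  have hT : (MvPowerSeries.X 0 * MvPowerSeries.X 1 * MvPowerSeries.X 2 : MvPowerSeries (Fin 3) ℤ)
      = MvPowerSeries.monomial (Finsupp.single 0 1 + Finsupp.single 1 1 + Finsupp.single 2 1) 1 := by
    rw [hA, MvPowerSeries.X_def, MvPowerSeries.monomial_mul_monomial, one_mul]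
  have h01 : (Finsupp.single (0 : Fin 3) 1 + Finsupp.single 1 1 ≤ n) ↔ (1 ≤ n 0 ∧ 1 ≤ n 1) := by
    rw [Finsupp.le_def]
    constructor
    · intro h; exact ⟨by simpa using h 0, by simpa using h 1⟩
    · rintro ⟨h1, h2⟩ i; fin_cases i <;> simp [Finsupp.single_apply] <;> omega
  have h02 : (Finsupp.single (0 : Fin 3) 1 + Finsupp.single 2 1 ≤ n) ↔ (1 ≤ n 0 ∧ 1 ≤ n 2) := by
    rw [Finsupp.le_def]
    constructor
    · intro h; exact ⟨by simpa using h 0, by simpa using h 2⟩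
    · rintro ⟨h1, h2⟩ i; fin_cases i <;> simp [Finsupp.single_apply] <;> omega
  have h12 : (Finsupp.single (1 : Fin 3) 1 + Finsupp.single 2 1 ≤ n) ↔ (1 ≤ n 1 ∧ 1 ≤ n 2) := by
    rw [Finsupp.le_def]
    constructor
    · intro h; exact ⟨by simpa using h 1, by simpa using h 2⟩
    · rintro ⟨h1, h2⟩ i; fin_cases i <;> simp [Finsupp.single_apply] <;> omega
  have h012 : (Finsupp.single (0 : Fin 3) 1 + Finsupp.single 1 1 + Finsupp.single 2 1 ≤ n)
      ↔ (1 ≤ n 0 ∧ 1 ≤ n 1 ∧ 1 ≤ n 2) := by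
    rw [Finsupp.le_def]
    constructor
    · intro h; exact ⟨by simpa using h 0, by simpa using h 1, by simpa using h 2⟩
    · rintro ⟨h1, h2, h3⟩ i; fin_cases i <;> simp [Finsupp.single_apply] <;> omega
  have hA' : MvPowerSeries.coeff n (Fser3 * (MvPowerSeries.X 0 * MvPowerSeries.X 1))
      = (if 1 ≤ n 0 ∧ 1 ≤ n 1 then g3 (n 0 - 1) (n 1 - 1) (n 2) else 0) := by
    rw [hA, MvPowerSeries.coeff_mul_monomial]
    by_cases h : (Finsupp.single (0 : Fin 3) 1 + Finsupp.single 1 1) ≤ n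
    · rw [if_pos h, if_pos (h01.mp h), mul_one, hF]
      simp [Finsupp.tsub_apply, Finsupp.single_apply]
    · rw [if_neg h, if_neg (fun hc => h (h01.mpr hc))]
  have hB' : MvPowerSeries.coeff n (Fser3 * (MvPowerSeries.X 0 * MvPowerSeries.X 2))
      = (if 1 ≤ n 0 ∧ 1 ≤ n 2 then g3 (n 0 - 1) (n 1) (n 2 - 1) else 0) := by
    rw [hB, MvPowerSeries.coeff_mul_monomial]
    by_cases h : (Finsupp.single (0 : Fin 3) 1 + Finsupp.single 2 1) ≤ n
    · rw [if_pos h, if_pos (h02.mp h), mul_one, hF]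
      simp [Finsupp.tsub_apply, Finsupp.single_apply]
    · rw [if_neg h, if_neg (fun hc => h (h02.mpr hc))]
  have hC' : MvPowerSeries.coeff n (Fser3 * (MvPowerSeries.X 1 * MvPowerSeries.X 2))
      = (if 1 ≤ n 1 ∧ 1 ≤ n 2 then g3 (n 0) (n 1 - 1) (n 2 - 1) else 0) := by
    rw [hC, MvPowerSeries.coeff_mul_monomial]
    by_cases h : (Finsupp.single (1 : Fin 3) 1 + Finsupp.single 2 1) ≤ n
    · rw [if_pos h, if_pos (h12.mp h), mul_one, hF]
      simp [Finsupp.tsub_apply, Finsupp.single_apply]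
    · rw [if_neg h, if_neg (fun hc => h (h12.mpr hc))]
  have hT' : MvPowerSeries.coeff n (Fser3 * (MvPowerSeries.X 0 * MvPowerSeries.X 1 * MvPowerSeries.X 2))
      = (if 1 ≤ n 0 ∧ 1 ≤ n 1 ∧ 1 ≤ n 2 then g3 (n 0 - 1) (n 1 - 1) (n 2 - 1) else 0) := by
    rw [hT, MvPowerSeries.coeff_mul_monomial]
    by_cases h : (Finsupp.single (0 : Fin 3) 1 + Finsupp.single 1 1 + Finsupp.single 2 1) ≤ n
    · rw [if_pos h, if_pos (h012.mp h), mul_one, hF]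
      simp [Finsupp.tsub_apply, Finsupp.single_apply]
    · rw [if_neg h, if_neg (fun hc => h (h012.mpr hc))]
  have hOne : MvPowerSeries.coeff n (1 : MvPowerSeries (Fin 3) ℤ)
      = (if n 0 = 0 ∧ n 1 = 0 ∧ n 2 = 0 then 1 else 0) := by
    rw [MvPowerSeries.coeff_one]
    by_cases h : n = 0
    · subst h; simp
    · rw [if_neg h, if_neg (fun hc => h (by ext i; fin_cases i <;> simp [hc.1, hc.2.1, hc.2.2]))]
  rw [two_mul, mul_sub, mul_sub, mul_sub, mul_sub, mul_one, mul_add, map_sub, map_sub, map_sub, map_sub, map_add,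
    hF, hA', hB', hC', hT', hOne]
  linear_combination g3_key (n 0) (n 1) (n 2)
end
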